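/- Assume the framework (ℋ1)–(ℋ3). Then for all t ∈ [0, ∞): (2R(t) − √3 + 2√3 ℳ(L_{π/3}^-(t)))/(2 − √3) ≤ ℳ(L_{π/3}^+(t)) ≤ (2R(t) + √3 + (2 − √3) ℳ(L_{π/3}^-(t)))/(2√3). -/

import Mathlib

open MeasureTheory Filter

/-- Mass of the arc `L_γ^+(t) = (φ(t) − π/2 + γ, φ(t) + π/2 − γ)` for the kinetic
density `f`: `ℳ(L_γ^+(t)) = ∬_{L_γ^+(t)×ℝ} f dθ dω`. -/
noncomputable def massPlus (f : ℝ → ℝ → ℝ → ℝ) (φ : ℝ → ℝ) (γ t : ℝ) : ℝ :=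
  ∫ ω : ℝ, ∫ θ in (φ t - Real.pi / 2 + γ)..(φ t + Real.pi / 2 - γ), f θ ω t

/-- Mass of the arc `L_γ^-(t) = (φ(t) + π/2 + γ, φ(t) + 3π/2 − γ)` for the kinetic
density `f`: `ℳ(L_γ^-(t)) = ∬_{L_γ^-(t)×ℝ} f dθ dω`. -/
noncomputable def massMinus (f : ℝ → ℝ → ℝ → ℝ) (φ : ℝ → ℝ) (γ t : ℝ) : ℝ :=
  ∫ ω : ℝ, ∫ θ in (φ t + Real.pi / 2 + γ)..(φ t + 3 * Real.pi / 2 - γ), f θ ω t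

/-!
At a fixed time put `c = φ(t)`; the order parameter is `R = ∬ cos (θ - c) f dθ dω`. Split a period
into the arc `|θ - c| ≤ π/6` (this is `L⁺_{π/3}`), the arc `|θ - c - π| ≤ π/6` (this is
`L⁻_{π/3}`) and the two remaining arcs, on which `|cos (θ - c)| ≤ √3/2`. Bounding `cos (θ - c)`
from above and from below by constants on each arc, and eliminating the mass of the two remaining
arcs through the total mass `1`, gives two linear inequalities between `R`, `ℳ(L⁺)` and `ℳ(L⁻)`:
they are the two claimed bounds.
-/

open Real Set

lemma sqrt_three_div_two_le_cos {x : ℝ} (hx : |x| ≤ π / 6) : √3 / 2 ≤ cos x := by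
  rw [← cos_abs, ← cos_pi_div_six]
  exact cos_le_cos_of_nonneg_of_le_pi (abs_nonneg x) (by linarith [pi_pos]) hx

lemma abs_cos_le_sqrt_three_div_two {x : ℝ} (h₁ : π / 6 ≤ |x|) (h₂ : |x| ≤ 5 * π / 6) :
    |cos x| ≤ √3 / 2 := by
  have := pi_pos
  rw [← cos_abs, abs_le, ← cos_pi_div_six]
  refine ⟨?_, cos_le_cos_of_nonneg_of_le_pi (by positivity) (by linarith) h₁⟩
  have h := cos_le_cos_of_nonneg_of_le_pi (x := π / 6) (y := π - |x|)
    (by positivity) (by linarith) (by linarith)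
  rw [cos_pi_sub] at h
  linarith

lemma cos_le_neg_sqrt_three_div_two {x : ℝ} (h₁ : 5 * π / 6 ≤ x) (h₂ : x ≤ 7 * π / 6) :
    cos x ≤ -(√3 / 2) := by
  have h := sqrt_three_div_two_le_cos (x := π - x) (abs_le.2 ⟨by linarith, by linarith⟩)
  rw [cos_pi_sub] at h
  linarith

lemma integral_weight_mul_bounds {w u : ℝ → ℝ} {a b α β : ℝ} (hab : a ≤ b)
    (hw : Continuous w) (hu : Continuous u) (hu₀ : ∀ x ∈ Icc a b, 0 ≤ u x)
    (hwα : ∀ x ∈ Icc a b, α ≤ w x) (hwβ : ∀ x ∈ Icc a b, w x ≤ β) :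
    α * ∫ x in a..b, u x ≤ ∫ x in a..b, w x * u x ∧
      ∫ x in a..b, w x * u x ≤ β * ∫ x in a..b, u x := by
  have hcu : ∀ c : ℝ, IntervalIntegrable (fun x => c * u x) volume a b :=
    fun c => (continuous_const.mul hu).intervalIntegrable a b
  have hwu := (hw.mul hu).intervalIntegrable (μ := volume) a b
  rw [← intervalIntegral.integral_const_mul, ← intervalIntegral.integral_const_mul]
  exact ⟨intervalIntegral.integral_mono_on hab (hcu α) hwu
      fun x hx => mul_le_mul_of_nonneg_right (hwα x hx) (hu₀ x hx),
    intervalIntegral.integral_mono_on hab hwu (hcu β)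
      fun x hx => mul_le_mul_of_nonneg_right (hwβ x hx) (hu₀ x hx)⟩

lemma integral_le_integral_period {u : ℝ → ℝ} {T a b : ℝ} (hu : Continuous u)
    (hu₀ : ∀ x, 0 ≤ u x) (hper : Function.Periodic u T) (hb : b ≤ a + T) :
    ∫ x in a..b, u x ≤ ∫ x in 0..T, u x := by
  have hshift := hper.intervalIntegral_add_eq a 0
  rw [zero_add] at hshift
  rw [← hshift, ← intervalIntegral.integral_add_adjacent_intervals
    (hu.intervalIntegrable a b) (hu.intervalIntegrable b (a + T))]
  linarith [intervalIntegral.integral_nonneg (μ := volume) hb fun x _ => hu₀ x]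

lemma integrable_intervalIntegral_weight_mul {F : ℝ → ℝ → ℝ} {w : ℝ → ℝ} {T a b : ℝ}
    (hF : Continuous (Function.uncurry F)) (hF₀ : ∀ θ ω, 0 ≤ F θ ω)
    (hper : ∀ ω, Function.Periodic (fun θ => F θ ω) T)
    (hmass : Integrable fun ω => ∫ θ in 0..T, F θ ω)
    (hw : Continuous w) (hw₁ : ∀ x, |w x| ≤ 1) (hab : a ≤ b) (hb : b ≤ a + T) :
    Integrable fun ω => ∫ θ in a..b, w θ * F θ ω := by
  have hFω : ∀ ω, Continuous fun θ => F θ ω :=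
    fun ω => hF.comp (continuous_id.prodMk continuous_const)
  refine hmass.mono' ?_ (ae_of_all _ fun ω => ?_)
  · exact (intervalIntegral.continuous_parametric_intervalIntegral_of_continuous'
      (f := fun ω θ => w θ * F θ ω) ((hw.comp continuous_snd).mul (hF.comp continuous_swap))
      a b).aestronglyMeasurable
  · obtain ⟨hlo, hhi⟩ := integral_weight_mul_bounds hab hw (hFω ω) (fun x _ => hF₀ x ω)
      (fun x _ => (abs_le.1 (hw₁ x)).1) (fun x _ => (abs_le.1 (hw₁ x)).2)
    have hperiod := integral_le_integral_period (hFω ω) (hF₀ · ω) (hper ω) hb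
    rw [Real.norm_eq_abs, abs_le]
    constructor <;> linarith

lemma integral_cos_sub_mul_eq {u : ℝ → ℝ} (hu : Continuous u)
    (hper : Function.Periodic u (2 * π)) (a c : ℝ) :
    ∫ θ in a..a + 2 * π, cos (θ - c) * u θ
      = cos c * (∫ θ in 0..2 * π, cos θ * u θ) + sin c * ∫ θ in 0..2 * π, sin θ * u θ := by
  have hper' : Function.Periodic (fun θ => cos (θ - c) * u θ) (2 * π) := fun θ => by
    simp only [hper θ, add_sub_right_comm, cos_add_two_pi]
  rw [hper'.intervalIntegral_add_eq a 0, zero_add, ← intervalIntegral.integral_const_mul,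
    ← intervalIntegral.integral_const_mul, ← intervalIntegral.integral_add
      (Continuous.intervalIntegrable (by fun_prop) _ _)
      (Continuous.intervalIntegrable (by fun_prop) _ _)]
  congr with θ
  rw [cos_sub]
  ring

lemma integral_integral_cos_sub_mul_eq {F : ℝ → ℝ → ℝ} {R c : ℝ}
    (hF : Continuous (Function.uncurry F)) (hF₀ : ∀ θ ω, 0 ≤ F θ ω)
    (hper : ∀ ω, Function.Periodic (fun θ => F θ ω) (2 * π))
    (hmass : Integrable fun ω => ∫ θ in 0..2 * π, F θ ω)
    (hRcos : R * cos c = ∫ ω, ∫ θ in 0..2 * π, cos θ * F θ ω)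
    (hRsin : R * sin c = ∫ ω, ∫ θ in 0..2 * π, sin θ * F θ ω) (a : ℝ) :
    ∫ ω, ∫ θ in a..a + 2 * π, cos (θ - c) * F θ ω = R := by
  have h2π : (0 : ℝ) ≤ 2 * π := by positivity
  have hcos := integrable_intervalIntegral_weight_mul hF hF₀ hper hmass continuous_cos
    abs_cos_le_one h2π (by linarith)
  have hsin := integrable_intervalIntegral_weight_mul hF hF₀ hper hmass continuous_sin
    abs_sin_le_one h2π (by linarith)
  have hpoint : ∀ ω, ∫ θ in a..a + 2 * π, cos (θ - c) * F θ ω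
      = cos c * (∫ θ in 0..2 * π, cos θ * F θ ω) + sin c * ∫ θ in 0..2 * π, sin θ * F θ ω :=
    fun ω => integral_cos_sub_mul_eq (hF.comp (continuous_id.prodMk continuous_const))
      (hper ω) a c
  simp only [hpoint]
  rw [integral_add (hcos.const_mul _) (hsin.const_mul _), integral_const_mul,
    integral_const_mul, ← hRcos, ← hRsin]
  linear_combination R * sin_sq_add_cos_sq c

lemma integral_cos_sub_mul_bounds {u : ℝ → ℝ} (hu : Continuous u) (hu₀ : ∀ x, 0 ≤ u x)
    (c : ℝ) :
    2 * √3 * (∫ θ in (c - π / 6)..(c + π / 6), u θ)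
        - √3 * (∫ θ in (c - 5 * π / 6)..(c + 7 * π / 6), u θ)
        + (√3 - 2) * (∫ θ in (c + 5 * π / 6)..(c + 7 * π / 6), u θ)
      ≤ 2 * ∫ θ in (c - 5 * π / 6)..(c + 7 * π / 6), cos (θ - c) * u θ ∧
    2 * ∫ θ in (c - 5 * π / 6)..(c + 7 * π / 6), cos (θ - c) * u θ
      ≤ (2 - √3) * (∫ θ in (c - π / 6)..(c + π / 6), u θ)
        + √3 * (∫ θ in (c - 5 * π / 6)..(c + 7 * π / 6), u θ)
        - 2 * √3 * (∫ θ in (c + 5 * π / 6)..(c + 7 * π / 6), u θ) := by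
  have := pi_pos
  have hsplit : ∀ v : ℝ → ℝ, Continuous v →
      ∫ θ in (c - 5 * π / 6)..(c + 7 * π / 6), v θ
        = (∫ θ in (c - 5 * π / 6)..(c - π / 6), v θ) + (∫ θ in (c - π / 6)..(c + π / 6), v θ)
          + (∫ θ in (c + π / 6)..(c + 5 * π / 6), v θ)
          + ∫ θ in (c + 5 * π / 6)..(c + 7 * π / 6), v θ := fun v hv => by
    simp only [intervalIntegral.integral_add_adjacent_intervals (hv.intervalIntegrable _ _)
      (hv.intervalIntegrable _ _)]
  have hw : Continuous fun θ => cos (θ - c) := by fun_prop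
  have hside : ∀ x, π / 6 ≤ |x - c| → |x - c| ≤ 5 * π / 6 →
      -(√3 / 2) ≤ cos (x - c) ∧ cos (x - c) ≤ √3 / 2 :=
    fun x h₁ h₂ => abs_le.1 (abs_cos_le_sqrt_three_div_two h₁ h₂)
  obtain ⟨hl₄, hu₄⟩ := integral_weight_mul_bounds (a := c - 5 * π / 6) (b := c - π / 6)
    (by linarith) hw hu (fun x _ => hu₀ x)
    (fun x hx => (hside x (le_abs.2 (.inr (by linarith [hx.2])))
      (abs_le.2 ⟨by linarith [hx.1], by linarith [hx.2]⟩)).1)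
    (fun x hx => (hside x (le_abs.2 (.inr (by linarith [hx.2])))
      (abs_le.2 ⟨by linarith [hx.1], by linarith [hx.2]⟩)).2)
  obtain ⟨hl₁, hu₁⟩ := integral_weight_mul_bounds (a := c - π / 6) (b := c + π / 6)
    (by linarith) hw hu (fun x _ => hu₀ x)
    (fun x hx => sqrt_three_div_two_le_cos
      (abs_le.2 ⟨by linarith [hx.1], by linarith [hx.2]⟩))
    (fun x _ => cos_le_one _)
  obtain ⟨hl₂, hu₂⟩ := integral_weight_mul_bounds (a := c + π / 6) (b := c + 5 * π / 6)
    (by linarith) hw hu (fun x _ => hu₀ x)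
    (fun x hx => (hside x (le_abs.2 (.inl (by linarith [hx.1])))
      (abs_le.2 ⟨by linarith [hx.1], by linarith [hx.2]⟩)).1)
    (fun x hx => (hside x (le_abs.2 (.inl (by linarith [hx.1])))
      (abs_le.2 ⟨by linarith [hx.1], by linarith [hx.2]⟩)).2)
  obtain ⟨hl₃, hu₃⟩ := integral_weight_mul_bounds (a := c + 5 * π / 6) (b := c + 7 * π / 6)
    (by linarith) hw hu (fun x _ => hu₀ x) (fun x _ => neg_one_le_cos _)
    (fun x hx => cos_le_neg_sqrt_three_div_two (by linarith [hx.1]) (by linarith [hx.2]))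
  rw [hsplit u hu, hsplit (fun θ => cos (θ - c) * u θ) (hw.mul hu)]
  constructor <;> linarith

theorem arc_mass_bounds {F : ℝ → ℝ → ℝ} {R c : ℝ}
    (hF : Continuous (Function.uncurry F)) (hF₀ : ∀ θ ω, 0 ≤ F θ ω)
    (hper : ∀ ω, Function.Periodic (fun θ => F θ ω) (2 * π))
    (hmass : ∫ ω, ∫ θ in 0..2 * π, F θ ω = 1)
    (hRcos : R * cos c = ∫ ω, ∫ θ in 0..2 * π, cos θ * F θ ω)
    (hRsin : R * sin c = ∫ ω, ∫ θ in 0..2 * π, sin θ * F θ ω) :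
    (2 * R - √3 + 2 * √3 * ∫ ω, ∫ θ in (c + 5 * π / 6)..(c + 7 * π / 6), F θ ω) / (2 - √3)
        ≤ ∫ ω, ∫ θ in (c - π / 6)..(c + π / 6), F θ ω ∧
      ∫ ω, ∫ θ in (c - π / 6)..(c + π / 6), F θ ω
        ≤ (2 * R + √3 + (2 - √3) * ∫ ω, ∫ θ in (c + 5 * π / 6)..(c + 7 * π / 6), F θ ω)
          / (2 * √3) := by
  have := pi_pos
  -- a Bochner integral equal to `1` is that of an integrable function
  have hint : Integrable fun ω => ∫ θ in 0..2 * π, F θ ω :=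
    .of_integral_ne_zero (hmass ▸ one_ne_zero)
  have hmass_int : ∀ {a b : ℝ}, a ≤ b → b ≤ a + 2 * π →
      Integrable fun ω => ∫ θ in a..b, F θ ω := fun hab hb => by
    simpa only [one_mul] using integrable_intervalIntegral_weight_mul hF hF₀ hper hint
      continuous_const (fun _ => (abs_one (α := ℝ)).le) hab hb
  have hperiod : c + 7 * π / 6 = c - 5 * π / 6 + 2 * π := by ring
  have hP : ∫ ω, ∫ θ in (c - 5 * π / 6)..(c + 7 * π / 6), F θ ω = 1 := by
    simp only [hperiod, (hper _).intervalIntegral_add_eq _ 0, zero_add, hmass]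
  have hW : ∫ ω, ∫ θ in (c - 5 * π / 6)..(c + 7 * π / 6), cos (θ - c) * F θ ω = R := by
    rw [hperiod]
    exact integral_integral_cos_sub_mul_eq hF hF₀ hper hint hRcos hRsin _
  have iW : Integrable fun ω => ∫ θ in (c - 5 * π / 6)..(c + 7 * π / 6), cos (θ - c) * F θ ω :=
    integrable_intervalIntegral_weight_mul hF hF₀ hper hint (by fun_prop)
      (fun _ => abs_cos_le_one _) (by linarith) (by linarith)
  have i₁ := hmass_int (a := c - π / 6) (b := c + π / 6) (by linarith) (by linarith)
  have i₃ := hmass_int (a := c + 5 * π / 6) (b := c + 7 * π / 6) (by linarith) (by linarith)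
  have iP := hmass_int (a := c - 5 * π / 6) (b := c + 7 * π / 6) (by linarith) (by linarith)
  have hFω : ∀ ω, Continuous fun θ => F θ ω :=
    fun ω => hF.comp (continuous_id.prodMk continuous_const)
  have hbounds := fun ω => integral_cos_sub_mul_bounds (hFω ω) (hF₀ · ω) c
  have hlo := integral_mono (((i₁.const_mul _).sub (iP.const_mul _)).add (i₃.const_mul _))
    (iW.const_mul _) fun ω => (hbounds ω).1
  have hhi := integral_mono (iW.const_mul _)
    (((i₁.const_mul _).add (iP.const_mul _)).sub (i₃.const_mul _)) fun ω => (hbounds ω).2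
  simp (disch := fun_prop) only [Pi.add_apply, Pi.sub_apply, integral_add, integral_sub,
    integral_const_mul, hP, hW] at hlo hhi
  have h3 : √3 < 2 := by nlinarith [Real.sq_sqrt (show (0 : ℝ) ≤ 3 by norm_num)]
  constructor
  · rw [div_le_iff₀ (by linarith)]
    linarith
  · rw [le_div_iff₀ (by positivity)]
    linarith

theorem stmt_18_general
    (f : ℝ → ℝ → ℝ → ℝ) (R φ : ℝ → ℝ)
    (hreg : ContDiff ℝ 1 (fun p : ℝ × ℝ × ℝ => f p.1 p.2.1 p.2.2))
    (hper : ∀ θ ω t, f (θ + 2 * Real.pi) ω t = f θ ω t)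
    (hpos : ∀ θ ω t, 0 ≤ f θ ω t)
    (hprob : ∀ t, (∫ ω : ℝ, ∫ θ in (0 : ℝ)..(2 * Real.pi), f θ ω t) = 1)
    (hRcos : ∀ t, R t * Real.cos (φ t)
      = ∫ ω : ℝ, ∫ θ in (0 : ℝ)..(2 * Real.pi), Real.cos θ * f θ ω t)
    (hRsin : ∀ t, R t * Real.sin (φ t)
      = ∫ ω : ℝ, ∫ θ in (0 : ℝ)..(2 * Real.pi), Real.sin θ * f θ ω t)
    : ∀ t, 0 ≤ t →
      (2 * R t - Real.sqrt 3 + 2 * Real.sqrt 3 * massMinus f φ (Real.pi / 3) t)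
          / (2 - Real.sqrt 3)
        ≤ massPlus f φ (Real.pi / 3) t ∧
      massPlus f φ (Real.pi / 3) t
        ≤ (2 * R t + Real.sqrt 3 + (2 - Real.sqrt 3) * massMinus f φ (Real.pi / 3) t)
          / (2 * Real.sqrt 3) := by
  intro t _
  have hF : Continuous (Function.uncurry fun θ ω => f θ ω t) :=
    hreg.continuous.comp (continuous_fst.prodMk (continuous_snd.prodMk continuous_const))
  have hplus : massPlus f φ (π / 3) t = ∫ ω, ∫ θ in (φ t - π / 6)..(φ t + π / 6), f θ ω t := by
    simp only [massPlus]
    ring_nf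
  have hminus : massMinus f φ (π / 3) t
      = ∫ ω, ∫ θ in (φ t + 5 * π / 6)..(φ t + 7 * π / 6), f θ ω t := by
    simp only [massMinus]
    ring_nf
  rw [hplus, hminus]
  exact arc_mass_bounds hF (fun θ ω => hpos θ ω t) (fun ω θ => hper θ ω t) (hprob t)
    (hRcos t) (hRsin t)

/-- under the framework (ℋ1)–(ℋ3), for all `t ≥ 0`,
`(2R(t) − √3 + 2√3 ℳ(L_{π/3}^-(t)))/(2 − √3) ≤ ℳ(L_{π/3}^+(t))
  ≤ (2R(t) + √3 + (2 − √3) ℳ(L_{π/3}^-(t)))/(2√3)`. -/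
theorem stmt_18
    (K M : ℝ) (hK : 0 < K)
    (f : ℝ → ℝ → ℝ → ℝ) (g : ℝ → ℝ) (R φ : ℝ → ℝ)
    (hreg : ContDiff ℝ 1 (fun p : ℝ × ℝ × ℝ => f p.1 p.2.1 p.2.2))
    (hper : ∀ θ ω t, f (θ + 2 * Real.pi) ω t = f θ ω t)
    (hpos : ∀ θ ω t, 0 ≤ f θ ω t)
    (hprob : ∀ t, (∫ ω : ℝ, ∫ θ in (0 : ℝ)..(2 * Real.pi), f θ ω t) = 1)
    (hgdef : ∀ ω t, (∫ θ in (0 : ℝ)..(2 * Real.pi), f θ ω t) = g ω)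
    (hPDE : ∀ θ ω t,
      deriv (fun s => f θ ω s) t +
        deriv (fun x =>
          (ω - K * ∫ ω' : ℝ, ∫ y in (0 : ℝ)..(2 * Real.pi), Real.sin (x - y) * f y ω' t)
            * f x ω t) θ = 0)
    (hRnn : ∀ t, 0 ≤ R t)
    (hRcos : ∀ t, R t * Real.cos (φ t)
      = ∫ ω : ℝ, ∫ θ in (0 : ℝ)..(2 * Real.pi), Real.cos θ * f θ ω t)
    (hRsin : ∀ t, R t * Real.sin (φ t)
      = ∫ ω : ℝ, ∫ θ in (0 : ℝ)..(2 * Real.pi), Real.sin θ * f θ ω t)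
    -- (ℋ1): R0 > 0 and supp g ⊆ [−M, M]
    (hR0 : 0 < R 0)
    (hsupp : ∀ ω, ω ∉ Set.Icc (-M) M → g ω = 0)
    -- (ℋ2): smallness of μ and largeness of K
    (μ : ℝ) (hμ : 0 < μ)
    (hH2a : 1 / 2 > 2 * M / (K * R 0) + 4 * M / (K * (R 0) ^ 2)
      + (2 * Real.sqrt 2 / (R 0 * Real.sqrt (R 0))) * Real.sqrt (M / K + μ))
    (hH2b : K ^ 2 * μ > 2 * M ^ 2 / (R 0) ^ 2 - 3 * M ^ 2 / (2 * R 0))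
    (hH2c : K > max (64 * M / Real.sqrt 3)
      (64 * Real.sqrt 3 * M / (3 - (Real.sqrt 3 - 2 * R 0) ^ 2)))
    -- (ℋ3): γ ∈ (π/3, π/2) and smallness of E1, E2, E3 (with R̲ = R0/2)
    (γ E1 E2 E3 a b : ℝ)
    (hγ1 : Real.pi / 3 < γ) (hγ2 : γ < Real.pi / 2)
    (hE1 : E1 = (Real.sin γ / (Real.cos γ) ^ 2) * (M / (K * (R 0 / 2)))
      + (1 - Real.sin γ) / 2)
    (hE2 : E2 = 1 - Real.sin γ
      + (1 + Real.sin γ) * (M / (K * (R 0 / 2) * (Real.cos γ) ^ 2))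
      + (Real.sin γ / (Real.cos γ) ^ 2) * (M / (K * (R 0 / 2))))
    (ha : a = ((R 0 / 2) / 3) * K * μ
      - (M ^ 2 / (6 * (R 0 / 2) * K) - M ^ 2 / (4 * K)))
    (hb : b = M ^ 2 / (4 * K) + M ^ 2 / (2 * (R 0 / 2) * K))
    (hE3 : E3 = |((R 0 / 2) * μ / 12) * (b / a)
      + (1 / (4 * K)) * (M ^ 2 / (6 * (R 0 / 2) * K) - M ^ 2 / (4 * K)) * (1 - b / a)
      + (b / (4 * K)) * Real.log (a / b)|)
    (hH3a : R 0 - 2 * E1 - E2 > R 0 / 2)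
    (hH3b : μ * R 0 / 24 > 2 * E1 + E2 + E3)
    : ∀ t, 0 ≤ t →
      (2 * R t - Real.sqrt 3 + 2 * Real.sqrt 3 * massMinus f φ (Real.pi / 3) t)
          / (2 - Real.sqrt 3)
        ≤ massPlus f φ (Real.pi / 3) t ∧
      massPlus f φ (Real.pi / 3) t
        ≤ (2 * R t + Real.sqrt 3 + (2 - Real.sqrt 3) * massMinus f φ (Real.pi / 3) t)
          / (2 * Real.sqrt 3) :=
  stmt_18_general f R φ hreg hper hpos hprob hRcos hRsin
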